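/- (Generalized fiducial Jacobian for multivariate linear regression.) Let A ∈ ℝ^{q×q} be invertible, X_{M·} ∈ ℝ^{|M|×n} of full row rank, Y ∈ ℝ^{q×n}, B ∈ ℝ^{q×|M|}, and set U := A⁻¹(Y − BX_{M·}) ∈ ℝ^{q×n}. Let P := [I_q ⊗ X_{M·}ᵀ | I_q ⊗ Uᵀ] ∈ ℝ^{qn × (q|M| + q²)}, where ⊗ denotes the Kronecker product. Then det(PᵀP) = (det(AAᵀ))^{−q} · (det(X_{M·}X_{M·}ᵀ))^{q} · (det Σ̂_{(M)})^{q}; in particular the Jacobian of the data-generating equation is J = (det(AAᵀ))^{−q/2}(det(X_{M·}X_{M·}ᵀ))^{q/2}(det Σ̂_{(M)})^{q/2}. -/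

import Mathlib

open Matrix
open scoped Kronecker

/-!
`PᵀP` is the block Gram matrix of `[I_q ⊗ Xᵀ | I_q ⊗ Uᵀ]`, and `I_q ⊗ Xᵀ = (I_q ⊗ X)ᵀ`. Expanding
its determinant around the invertible block `(I_q ⊗ X)(I_q ⊗ X)ᵀ = I_q ⊗ XXᵀ` leaves the Schur
complement `I_q ⊗ U(I − H)Uᵀ`, because the hat matrix of `I_q ⊗ X` is `I_q ⊗ H`. As `I − H` is a
symmetric idempotent killing the rows of `X`, `U(I − H) = A⁻¹Y(I − H)`, whence
`U(I − H)Uᵀ = A⁻¹ Σ̂ A⁻ᵀ`. Each Kronecker factor `I_q` turns a determinant into its `q`-th power,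
and the square root is taken factorwise since all three determinants are Gram determinants.
-/

namespace Matrix

theorem kronecker_sub {α l m n p : Type*} [NonUnitalNonAssocRing α] (A : Matrix l m α)
    (B₁ B₂ : Matrix n p α) : A ⊗ₖ (B₁ - B₂) = A ⊗ₖ B₁ - A ⊗ₖ B₂ := by
  ext
  simp only [kroneckerMap_apply, sub_apply, mul_sub]

theorem transpose_one_kronecker {α l m n : Type*} [MulZeroOneClass α] [DecidableEq l]
    (A : Matrix m n α) : ((1 : Matrix l l α) ⊗ₖ A)ᵀ = 1 ⊗ₖ Aᵀ := by
  rw [← kroneckerMap_transpose, transpose_one]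

theorem one_kronecker_mul_one_kronecker {α l m n p : Type*} [CommSemiring α] [Fintype l]
    [DecidableEq l] [Fintype n] (A : Matrix m n α) (B : Matrix n p α) :
    (1 : Matrix l l α) ⊗ₖ A * (1 : Matrix l l α) ⊗ₖ B = 1 ⊗ₖ (A * B) := by
  rw [← mul_kronecker_mul, Matrix.one_mul]

theorem det_one_kronecker {R l m : Type*} [CommRing R] [Fintype l] [DecidableEq l] [Fintype m]
    [DecidableEq m] (A : Matrix m m R) :
    ((1 : Matrix l l R) ⊗ₖ A).det = A.det ^ Fintype.card l := by
  rw [det_kronecker, det_one, one_pow, one_mul]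

theorem det_inv_mul_mul_transpose_inv {K k : Type*} [Field K] [Fintype k] [DecidableEq k]
    (A S : Matrix k k K) : (A⁻¹ * S * A⁻¹ᵀ).det = (A * Aᵀ).det⁻¹ * S.det := by
  rw [det_mul, det_mul, det_transpose, det_nonsing_inv, Ring.inverse_eq_inv', det_mul,
    det_transpose, mul_inv]
  ring

theorem det_mul_transpose_nonneg {m n : Type*} [Fintype m] [DecidableEq m] [Fintype n]
    (Z : Matrix m n ℝ) : 0 ≤ (Z * Zᵀ).det := by
  simpa only [conjTranspose_eq_transpose_of_trivial] using
    (posSemidef_self_mul_conjTranspose Z).det_nonneg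

section HatMatrix

variable {R : Type*} [CommRing R] {ι m n k : Type*} [Fintype m] [DecidableEq m] [Fintype n]

noncomputable def hatMatrix (X : Matrix m n R) : Matrix n n R := Xᵀ * (X * Xᵀ)⁻¹ * X

theorem transpose_hatMatrix (X : Matrix m n R) : (hatMatrix X)ᵀ = hatMatrix X := by
  simp only [hatMatrix, transpose_mul, transpose_transpose, transpose_nonsing_inv,
    Matrix.mul_assoc]

theorem hatMatrix_one_kronecker [Fintype ι] [DecidableEq ι] (X : Matrix m n R) :
    hatMatrix ((1 : Matrix ι ι R) ⊗ₖ X) = 1 ⊗ₖ hatMatrix X := by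
  simp only [hatMatrix, transpose_one_kronecker, one_kronecker_mul_one_kronecker, inv_kronecker,
    inv_one]

variable {X : Matrix m n R} (hX : IsUnit (X * Xᵀ).det)
include hX

theorem mul_hatMatrix : X * hatMatrix X = X := by
  rw [hatMatrix, ← Matrix.mul_assoc, ← Matrix.mul_assoc, mul_nonsing_inv _ hX, Matrix.one_mul]

theorem isIdempotentElem_hatMatrix : IsIdempotentElem (hatMatrix X) := by
  rw [IsIdempotentElem]
  nth_rw 1 [hatMatrix]
  rw [Matrix.mul_assoc, mul_hatMatrix hX, hatMatrix]

variable [DecidableEq n]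

theorem mul_one_sub_hatMatrix : X * (1 - hatMatrix X) = 0 := by
  rw [Matrix.mul_sub, Matrix.mul_one, mul_hatMatrix hX, sub_self]

theorem sub_mul_mul_one_sub_hatMatrix (Y : Matrix k n R) (B : Matrix k m R) :
    (Y - B * X) * (1 - hatMatrix X) = Y * (1 - hatMatrix X) := by
  rw [Matrix.sub_mul, Matrix.mul_assoc, mul_one_sub_hatMatrix hX, Matrix.mul_zero, sub_zero]

theorem mul_one_sub_hatMatrix_mul_transpose (Z : Matrix k n R) :
    Z * (1 - hatMatrix X) * Zᵀ = Z * (1 - hatMatrix X) * (Z * (1 - hatMatrix X))ᵀ := by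
  rw [transpose_mul, transpose_sub, transpose_one, transpose_hatMatrix, ← Matrix.mul_assoc,
    Matrix.mul_assoc Z (1 - hatMatrix X) (1 - hatMatrix X),
    (isIdempotentElem_hatMatrix hX).one_sub.eq]

theorem det_transpose_mul_fromCols [Fintype k] [DecidableEq k] (U : Matrix k n R) :
    ((fromCols Xᵀ Uᵀ)ᵀ * fromCols Xᵀ Uᵀ).det =
      (X * Xᵀ).det * (U * (1 - hatMatrix X) * Uᵀ).det := by
  let := invertibleOfIsUnitDet _ hX
  rw [transpose_fromCols, transpose_transpose, transpose_transpose, fromRows_mul_fromCols,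
    det_fromBlocks₁₁, invOf_eq_nonsing_inv, Matrix.mul_sub, Matrix.sub_mul, Matrix.mul_one,
    hatMatrix]
  simp only [Matrix.mul_assoc]

theorem det_transpose_mul_fromCols_one_kronecker [Fintype ι] [DecidableEq ι] [Fintype k]
    [DecidableEq k] (U : Matrix k n R) :
    ((fromCols ((1 : Matrix ι ι R) ⊗ₖ Xᵀ) ((1 : Matrix ι ι R) ⊗ₖ Uᵀ))ᵀ *
        fromCols ((1 : Matrix ι ι R) ⊗ₖ Xᵀ) ((1 : Matrix ι ι R) ⊗ₖ Uᵀ)).det =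
      (X * Xᵀ).det ^ Fintype.card ι * (U * (1 - hatMatrix X) * Uᵀ).det ^ Fintype.card ι := by
  have hX' : IsUnit (((1 : Matrix ι ι R) ⊗ₖ X) * ((1 : Matrix ι ι R) ⊗ₖ X)ᵀ).det := by
    rw [transpose_one_kronecker, one_kronecker_mul_one_kronecker, det_one_kronecker]
    exact hX.pow _
  rw [← transpose_one_kronecker, ← transpose_one_kronecker, det_transpose_mul_fromCols hX',
    hatMatrix_one_kronecker, ← one_kronecker_one, ← kronecker_sub, transpose_one_kronecker,
    transpose_one_kronecker, one_kronecker_mul_one_kronecker, one_kronecker_mul_one_kronecker,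
    one_kronecker_mul_one_kronecker, det_one_kronecker, det_one_kronecker]

end HatMatrix

end Matrix

theorem Real.sqrt_inv_pow_mul_pow_mul_pow {a b c : ℝ} (ha : 0 ≤ a) (hb : 0 ≤ b) (hc : 0 ≤ c)
    (q : ℕ) :
    √(a⁻¹ ^ q * b ^ q * c ^ q) = a ^ (-(q : ℝ) / 2) * b ^ ((q : ℝ) / 2) * c ^ ((q : ℝ) / 2) := by
  rw [← mul_pow, ← mul_pow, Real.sqrt_eq_rpow, ← Real.rpow_natCast,
    ← Real.rpow_mul (by positivity), Real.mul_rpow (by positivity) hc,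
    Real.mul_rpow (by positivity) hb, Real.inv_rpow ha, neg_div, Real.rpow_neg ha]
  ring_nf

theorem statement10_general {q n m : ℕ} (A : Matrix (Fin q) (Fin q) ℝ)
    (XM : Matrix (Fin m) (Fin n) ℝ) (hX : IsUnit (XM * XMᵀ).det)
    (Y : Matrix (Fin q) (Fin n) ℝ) (B : Matrix (Fin q) (Fin m) ℝ) :
    ∀ (U : Matrix (Fin q) (Fin n) ℝ), U = A⁻¹ * (Y - B * XM) →
    ∀ (P : Matrix (Fin q × Fin n) ((Fin q × Fin m) ⊕ (Fin q × Fin q)) ℝ),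
      P = Matrix.fromCols ((1 : Matrix (Fin q) (Fin q) ℝ) ⊗ₖ XMᵀ)
            ((1 : Matrix (Fin q) (Fin q) ℝ) ⊗ₖ Uᵀ) →
      (Pᵀ * P).det
          = ((A * Aᵀ).det)⁻¹ ^ q * ((XM * XMᵀ).det) ^ q *
            ((Y * ((1 : Matrix (Fin n) (Fin n) ℝ) - XMᵀ * (XM * XMᵀ)⁻¹ * XM) * Yᵀ).det) ^ q
        ∧
      Real.sqrt ((Pᵀ * P).det)
          = ((A * Aᵀ).det) ^ (-(q : ℝ) / 2) * ((XM * XMᵀ).det) ^ ((q : ℝ) / 2) *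
            ((Y * ((1 : Matrix (Fin n) (Fin n) ℝ) - XMᵀ * (XM * XMᵀ)⁻¹ * XM) * Yᵀ).det) ^
              ((q : ℝ) / 2) := by
  intro U hU P hP
  have hUres : U * (1 - hatMatrix XM) = A⁻¹ * (Y * (1 - hatMatrix XM)) := by
    rw [hU, Matrix.mul_assoc, sub_mul_mul_one_sub_hatMatrix hX]
  have hres : U * (1 - hatMatrix XM) * Uᵀ = A⁻¹ * (Y * (1 - hatMatrix XM) * Yᵀ) * A⁻¹ᵀ := by
    rw [mul_one_sub_hatMatrix_mul_transpose hX, mul_one_sub_hatMatrix_mul_transpose hX Y, hUres,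
      transpose_mul]
    simp only [Matrix.mul_assoc]
  have hdet : (Pᵀ * P).det = (A * Aᵀ).det⁻¹ ^ q * (XM * XMᵀ).det ^ q *
      (Y * (1 - hatMatrix XM) * Yᵀ).det ^ q := by
    rw [hP, det_transpose_mul_fromCols_one_kronecker hX, hres, det_inv_mul_mul_transpose_inv,
      Fintype.card_fin, mul_pow]
    ring
  refine ⟨hdet, ?_⟩
  have hA : 0 ≤ (A * Aᵀ).det := by
    rw [det_mul, det_transpose]
    exact mul_self_nonneg _
  have hS : 0 ≤ (Y * (1 - hatMatrix XM) * Yᵀ).det := by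
    rw [mul_one_sub_hatMatrix_mul_transpose hX]
    exact det_mul_transpose_nonneg _
  rw [hdet]
  exact Real.sqrt_inv_pow_mul_pow_mul_pow hA (det_mul_transpose_nonneg XM) hS q

/-- the generalized fiducial Jacobian for multivariate linear regression.
With `U := A⁻¹(Y − B X_{M·})` and `P := [I_q ⊗ X_{M·}ᵀ | I_q ⊗ Uᵀ]`,
`det(PᵀP) = det(AAᵀ)^{−q} det(X_{M·}X_{M·}ᵀ)^q det(Σ̂_{(M)})^q`, and the Jacobian
`J = √(det PᵀP) = det(AAᵀ)^{−q/2} det(X_{M·}X_{M·}ᵀ)^{q/2} det(Σ̂_{(M)})^{q/2}`. -/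
theorem statement10 {q n m : ℕ} (A : Matrix (Fin q) (Fin q) ℝ) (hA : IsUnit A.det)
    (XM : Matrix (Fin m) (Fin n) ℝ) (hX : IsUnit (XM * XMᵀ).det)
    (Y : Matrix (Fin q) (Fin n) ℝ) (B : Matrix (Fin q) (Fin m) ℝ) :
    ∀ (U : Matrix (Fin q) (Fin n) ℝ), U = A⁻¹ * (Y - B * XM) →
    ∀ (P : Matrix (Fin q × Fin n) ((Fin q × Fin m) ⊕ (Fin q × Fin q)) ℝ),
      P = Matrix.fromCols ((1 : Matrix (Fin q) (Fin q) ℝ) ⊗ₖ XMᵀ)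
            ((1 : Matrix (Fin q) (Fin q) ℝ) ⊗ₖ Uᵀ) →
      (Pᵀ * P).det
          = ((A * Aᵀ).det)⁻¹ ^ q * ((XM * XMᵀ).det) ^ q *
            ((Y * ((1 : Matrix (Fin n) (Fin n) ℝ) - XMᵀ * (XM * XMᵀ)⁻¹ * XM) * Yᵀ).det) ^ q
        ∧
      Real.sqrt ((Pᵀ * P).det)
          = ((A * Aᵀ).det) ^ (-(q : ℝ) / 2) * ((XM * XMᵀ).det) ^ ((q : ℝ) / 2) *
            ((Y * ((1 : Matrix (Fin n) (Fin n) ℝ) - XMᵀ * (XM * XMᵀ)⁻¹ * XM) * Yᵀ).det) ^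
              ((q : ℝ) / 2) :=
  statement10_general A XM hX Y B
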